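/- arXiv:math/0606260 — 7 statements merged into one kernel-verified Lean document; each statement's English description precedes it below -/
import Mathlib

section
/- Let α ⊆ Δ be a closed subset. Then the subgroup GL_n(R)_α of GL_n(R) generated by the elementary matrices {ε_ij(r) : (i,j) ∈ α, r ∈ R} consists exactly of those matrices M = (a_kl) with a_kk = 1 for all k, a_kl arbitrary for (k,l) ∈ α, and a_kl = 0 for (k,l) ∈ Δ∖α. In particular, every n×n matrix over R with 1's on the diagonal whose off-diagonal support is contained in α is invertible, and this set of matrices is a subgroup of GL_n(R) equal to GL_n(R)_α. -/
/-- The elementary matrix `ε_{ij}(r)`: the identity matrix with an extra entry `r`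
in the off-diagonal position `(i, j)`. -/
def elemMat {n : ℕ} {R : Type*} [Ring R] (i j : Fin n) (r : R) :
    Matrix (Fin n) (Fin n) R :=
  1 + Matrix.single i j r

/-- The elementary matrix `ε_{ij}(r)` as a unit (invertible matrix) for `i ≠ j`,
i.e. as an element of `GL_n(R)`. -/
def elemUnit {n : ℕ} {R : Type*} [Ring R] (i j : Fin n) (hij : i ≠ j) (r : R) :
    (Matrix (Fin n) (Fin n) R)ˣ where
  val := elemMat i j r
  inv := elemMat i j (-r)
  val_inv := by
    have h0 : Matrix.single i j r * Matrix.single i j (-r) = 0 :=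
      Matrix.single_mul_single_of_ne _ _ _ _ hij.symm _
    simp [elemMat, mul_add, add_mul, h0, ← Matrix.single_add, add_assoc]
  inv_val := by
    have h0 : Matrix.single i j (-r) * Matrix.single i j r = 0 :=
      Matrix.single_mul_single_of_ne _ _ _ _ hij.symm _
    simp [elemMat, mul_add, add_mul, h0, ← Matrix.single_add, add_assoc]

/-- `GL_n(R)_α` : the subgroup of `GL_n(R)` generated by the elementary matrices
`ε_{ij}(r)` with off-diagonal position `(i, j)` in `α`. -/
def glSub {n : ℕ} (R : Type*) [Ring R] (α : Set (Fin n × Fin n)) :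
    Subgroup (Matrix (Fin n) (Fin n) R)ˣ :=
  Subgroup.closure
    {u | ∃ (i j : Fin n) (hij : i ≠ j) (r : R), (i, j) ∈ α ∧ u = elemUnit i j hij r}

/-!
Since `α` is closed, the matrices agreeing with the identity outside `α` form a monoid: in
`(M * N) k l = ∑ m, M k m * N m l` with `(k, l) ∉ α`, a term with `(k, m) ∈ α` has `(m, l) ∉ α`,
so only `m = k` contributes. Its units form a subgroup containing the generators of `GL_n(R)_α`.

Conversely, an irreflexive closed `α` is a strict order on `Fin n`. If `(i, j)` lies in the
support `s` of `A - 1` with `i` minimal, the column `i` of `A` is that of the identity, so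
`A = A' * ε_ij(A i j)` where `A'` is `A` with the entry `(i, j)` cleared; induct on `s`.
-/

section Pattern

variable {ι : Type*} [Fintype ι] [DecidableEq ι]

def unipotentSubmonoid (R : Type*) [Semiring R] (α : Set (ι × ι))
    (hclosed : ∀ i j k : ι, (i, j) ∈ α → (j, k) ∈ α → (i, k) ∈ α) :
    Submonoid (Matrix ι ι R) where
  carrier := {A | ∀ k l, (k, l) ∉ α → A k l = (1 : Matrix ι ι R) k l}
  one_mem' _ _ _ := rfl
  mul_mem' {M N} hM hN k l hkl := by
    calc (M * N) k l = ((1 : Matrix ι ι R) * N) k l := by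
          simp only [Matrix.mul_apply]
          refine Finset.sum_congr rfl fun m _ => ?_
          by_cases hkm : (k, m) ∈ α
          · have hml : (m, l) ∉ α := fun h => hkl (hclosed _ _ _ hkm h)
            have hml' : m ≠ l := by rintro rfl; exact hkl hkm
            rw [hN m l hml, Matrix.one_apply_ne hml', mul_zero, mul_zero]
          · rw [hM k m hkm]
      _ = (1 : Matrix ι ι R) k l := by rw [Matrix.one_mul, hN k l hkl]

variable {R : Type*} [Semiring R] {α : Set (ι × ι)}
  (hclosed : ∀ i j k : ι, (i, j) ∈ α → (j, k) ∈ α → (i, k) ∈ α)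

theorem mem_unipotentSubmonoid_iff_diag_offDiag (hΔ : ∀ p ∈ α, p.1 ≠ p.2)
    {A : Matrix ι ι R} :
    A ∈ unipotentSubmonoid R α hclosed ↔
      (∀ k, A k k = 1) ∧ ∀ k l, k ≠ l → (k, l) ∉ α → A k l = 0 := by
  refine ⟨fun h => ⟨fun k => ?_, fun k l hkl hα => ?_⟩, fun ⟨hdiag, hoff⟩ k l hα => ?_⟩
  · simpa using h k k fun hk => hΔ _ hk rfl
  · simpa [Matrix.one_apply_ne hkl] using h k l hα
  · obtain rfl | hkl := eq_or_ne k l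
    · simp [hdiag]
    · rw [hoff k l hkl hα, Matrix.one_apply_ne hkl]

end Pattern

theorem mul_single_eq_single_of_col_eq_one {ι R : Type*} [Fintype ι] [DecidableEq ι]
    [NonAssocSemiring R] {A : Matrix ι ι R} {i : ι} (hcol : ∀ k, A k i = (1 : Matrix ι ι R) k i)
    (j : ι) (r : R) : A * Matrix.single i j r = Matrix.single i j r := by
  ext k l
  obtain rfl | hlj := eq_or_ne l j
  · rw [Matrix.mul_single_apply_same, hcol]
    obtain rfl | hki := eq_or_ne k i
    · simp
    · rw [Matrix.one_apply_ne hki, zero_mul, Matrix.single_apply_of_row_ne hki.symm]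
  · rw [Matrix.mul_single_apply_of_ne (hbj := hlj),
      Matrix.single_apply_of_ne (h := fun h => hlj h.2.symm)]

theorem wellFounded_of_closed_of_irrefl {ι : Type*} [Finite ι] {α : Set (ι × ι)}
    (hclosed : ∀ i j k : ι, (i, j) ∈ α → (j, k) ∈ α → (i, k) ∈ α)
    (hΔ : ∀ p ∈ α, p.1 ≠ p.2) :
    WellFounded fun a b : ι => (a, b) ∈ α :=
  have : IsTrans ι fun a b => (a, b) ∈ α := ⟨hclosed⟩
  have : Std.Irrefl fun a b : ι => (a, b) ∈ α := ⟨fun _ h => hΔ _ h rfl⟩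
  Finite.wellFounded_of_trans_of_irrefl _

section GlSub

variable {n : ℕ} {R : Type*} [Ring R] {α : Set (Fin n × Fin n)}
  (hclosed : ∀ i j k : Fin n, (i, j) ∈ α → (j, k) ∈ α → (i, k) ∈ α)

theorem elemMat_mem_unipotentSubmonoid {i j : Fin n} (hij : (i, j) ∈ α) (r : R) :
    elemMat i j r ∈ unipotentSubmonoid R α hclosed := fun k l hkl => by
  have hne : ¬(i = k ∧ j = l) := by rintro ⟨rfl, rfl⟩; exact hkl hij
  rw [elemMat, Matrix.add_apply, Matrix.single_apply_of_ne (h := hne), add_zero]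

theorem glSub_le_units_unipotentSubmonoid :
    glSub R α ≤ (unipotentSubmonoid R α hclosed).units := by
  rw [glSub, Subgroup.closure_le]
  rintro _ ⟨i, j, hij, r, hα, rfl⟩
  exact ⟨elemMat_mem_unipotentSubmonoid hclosed hα r,
    elemMat_mem_unipotentSubmonoid hclosed hα (-r)⟩

theorem exists_mem_glSub_val_eq_of_support_subset
    (hclosed : ∀ i j k : Fin n, (i, j) ∈ α → (j, k) ∈ α → (i, k) ∈ α) (hΔ : ∀ p ∈ α, p.1 ≠ p.2)
    (s : Finset (Fin n × Fin n)) (hs : ↑s ⊆ α) (A : Matrix (Fin n) (Fin n) R)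
    (hA : ∀ k l, (k, l) ∉ s → A k l = (1 : Matrix (Fin n) (Fin n) R) k l) :
    ∃ u ∈ glSub R α, (u : Matrix (Fin n) (Fin n) R) = A := by
  induction s using Finset.strongInduction generalizing A with
  | H s ih =>
  obtain rfl | ⟨p, hp⟩ := s.eq_empty_or_nonempty
  · exact ⟨1, one_mem _, by ext k l; exact (hA k l (Finset.notMem_empty _)).symm⟩
  obtain ⟨i, ⟨j, hijs⟩, hmin⟩ :=
    (wellFounded_of_closed_of_irrefl hclosed hΔ).has_min {i | ∃ j, (i, j) ∈ s} ⟨p.1, p.2, hp⟩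
  have hij : i ≠ j := hΔ _ (hs hijs)
  have hcol : ∀ k, (k, i) ∉ s := fun k hki => hmin k ⟨i, hki⟩ (hs hki)
  set A' := A - Matrix.single i j (A i j) with hA'_def
  have hA' : ∀ k l, (k, l) ∉ s.erase (i, j) → A' k l = (1 : Matrix (Fin n) (Fin n) R) k l := by
    intro k l hkl
    by_cases hkl' : (k, l) = (i, j)
    · obtain ⟨rfl, rfl⟩ := Prod.ext_iff.mp hkl'
      simp [A', Matrix.one_apply_ne hij]
    · have hne : ¬(i = k ∧ j = l) := fun ⟨hi, hj⟩ => hkl' (by rw [hi, hj])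
      rw [hA'_def, Matrix.sub_apply, Matrix.single_apply_of_ne (h := hne), sub_zero]
      exact hA k l fun h => hkl (Finset.mem_erase.mpr ⟨hkl', h⟩)
  obtain ⟨u, hu, huA'⟩ := ih _ (Finset.erase_ssubset hijs)
    ((Finset.coe_subset.mpr (Finset.erase_subset _ _)).trans hs) A' hA'
  refine ⟨u * elemUnit i j hij (A i j),
    mul_mem hu (Subgroup.subset_closure ⟨i, j, hij, A i j, hs hijs, rfl⟩), ?_⟩
  have hcol' : ∀ k, A' k i = (1 : Matrix (Fin n) (Fin n) R) k i :=
    fun k => hA' k i fun h => hcol k (Finset.mem_of_mem_erase h)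
  change (u : Matrix (Fin n) (Fin n) R) * elemMat i j (A i j) = A
  rw [huA', elemMat, mul_add, mul_one, mul_single_eq_single_of_col_eq_one hcol', sub_add_cancel]

theorem exists_mem_glSub_val_eq (hΔ : ∀ p ∈ α, p.1 ≠ p.2) {A : Matrix (Fin n) (Fin n) R}
    (hA : A ∈ unipotentSubmonoid R α hclosed) :
    ∃ u ∈ glSub R α, (u : Matrix (Fin n) (Fin n) R) = A :=
  exists_mem_glSub_val_eq_of_support_subset hclosed hΔ (Set.toFinite α).toFinset (by simp) A
    fun k l h => hA k l (by simpa using h)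

theorem mem_glSub_iff (hΔ : ∀ p ∈ α, p.1 ≠ p.2) (M : (Matrix (Fin n) (Fin n) R)ˣ) :
    M ∈ glSub R α ↔ (M : Matrix (Fin n) (Fin n) R) ∈ unipotentSubmonoid R α hclosed := by
  refine ⟨fun hM => (glSub_le_units_unipotentSubmonoid hclosed hM).1, fun hM => ?_⟩
  obtain ⟨u, hu, huM⟩ := exists_mem_glSub_val_eq hclosed hΔ hM
  rwa [← Units.ext huM]

end GlSub

/-- for a closed subset `α` of the set of off-diagonal positions, the subgroup
`GL_n(R)_α` generated by the elementary matrices with positions in `α` consists exactly of the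
(invertible) matrices having `1`s on the diagonal, arbitrary entries at positions in `α` and
`0`s at the off-diagonal positions outside `α`; moreover every matrix of this shape is
invertible. -/
theorem glSub_carrier_eq {n : ℕ} (R : Type*) [Ring R]
    (α : Set (Fin n × Fin n))
    (hΔ : ∀ p ∈ α, p.1 ≠ p.2)
    (hclosed : ∀ i j k : Fin n, (i, j) ∈ α → (j, k) ∈ α → (i, k) ∈ α) :
    (∀ M : (Matrix (Fin n) (Fin n) R)ˣ,
        M ∈ glSub R α ↔
          (∀ k, M.val k k = 1) ∧
            ∀ k l : Fin n, k ≠ l → (k, l) ∉ α → M.val k l = 0) ∧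
      ∀ A : Matrix (Fin n) (Fin n) R,
        (∀ k, A k k = 1) → (∀ k l : Fin n, k ≠ l → (k, l) ∉ α → A k l = 0) → IsUnit A := by
  have hshape (A : Matrix (Fin n) (Fin n) R) :=
    mem_unipotentSubmonoid_iff_diag_offDiag hclosed hΔ (A := A)
  refine ⟨fun M => (mem_glSub_iff hclosed hΔ M).trans (hshape _), fun A hdiag hoff => ?_⟩
  obtain ⟨u, -, huA⟩ := exists_mem_glSub_val_eq hclosed hΔ ((hshape A).2 ⟨hdiag, hoff⟩)
  exact ⟨u, huA⟩
end

section
/- Let Φ be the poset of closed subsets of Δ ordered by inclusion, and consider the functor from Φ to the category of groups sending α to the subgroup GL_n(R)_α of GL_n(R), with structure maps the inclusions GL_n(R)_α ↪ GL_n(R)_β for α ⊆ β. Then there is a group isomorphism St_n(R) ≅ colim_{α ∈ Φ} GL_n(R)_α under which the canonical homomorphism colim_{α ∈ Φ} GL_n(R)_α → GL_n(R) induced by the inclusions GL_n(R)_α ≤ GL_n(R) corresponds to the homomorphism φ : St_n(R) → GL_n(R) with φ(x_ij(r)) = ε_ij(r). -/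
open scoped commutatorElement

/-- The Steinberg relations on the generators `x_{ij}(r)`, `(i,j) ∈ α`, `r ∈ R`. -/
def stRels (n : ℕ) (R : Type*) [Ring R] (α : Set (Fin n × Fin n))
    (hc : ∀ i j k : Fin n, (i, j) ∈ α → (j, k) ∈ α → i ≠ k → (i, k) ∈ α) :
    Set (FreeGroup ({p : Fin n × Fin n // p ∈ α} × R)) :=
  {w | ∃ (p : {p : Fin n × Fin n // p ∈ α}) (a b : R),
      w = FreeGroup.of (p, a) * FreeGroup.of (p, b) * (FreeGroup.of (p, a + b))⁻¹} ∪
  {w | ∃ (p q : {p : Fin n × Fin n // p ∈ α}) (a b : R),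
      p.1.2 ≠ q.1.1 ∧ p.1.1 ≠ q.1.2 ∧
      w = ⁅FreeGroup.of (p, a), FreeGroup.of (q, b)⁆} ∪
  {w | ∃ (p q : {p : Fin n × Fin n // p ∈ α}) (a b : R) (h : p.1.2 = q.1.1)
      (hil : p.1.1 ≠ q.1.2),
      w = ⁅FreeGroup.of (p, a), FreeGroup.of (q, b)⁆ *
        (FreeGroup.of
          (⟨(p.1.1, q.1.2), hc p.1.1 p.1.2 q.1.2 p.2 (by rw [h]; exact q.2) hil⟩, a * b))⁻¹}

/-- The set `Δ` of all off-diagonal positions. -/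
def deltaSet (n : ℕ) : Set (Fin n × Fin n) := {p | p.1 ≠ p.2}

/-- `α` is a closed subset of the off-diagonal positions. -/
def IsClosedSubset {n : ℕ} (α : Set (Fin n × Fin n)) : Prop :=
  (∀ p ∈ α, p.1 ≠ p.2) ∧ ∀ i j k : Fin n, (i, j) ∈ α → (j, k) ∈ α → (i, k) ∈ α

/-- The Steinberg group `St_n(R)`. -/
abbrev Steinberg (n : ℕ) (R : Type) [Ring R] :=
  PresentedGroup (stRels n R (deltaSet n)
    (fun i _ k _ _ hik => show (i, k) ∈ deltaSet n from hik))


/-! The Steinberg relations hold for elementary matrices, which gives `φ`. The heart of the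
matter is that `φ` is injective on the subgroup `St_α` generated by the `x_ij(r)` with
`(i,j) ∈ α`, for `α` closed. Pick `(i,j) ∈ α` that is not a composite of `(i,k), (k,j) ∈ α`;
then `α' = α \ {(i,j)}` is closed, `x_ij(r)` normalises `St_α'` by the commutator relations, and
so `St_α = x_ij(R) · St_α'`. Every matrix in `φ(St_α')` agrees with the identity off `α'`, so
the `(i,j)` entry of `φ(x_ij(r) m)` is `r`, and induction on `α` applies. Thus `St_α ≅ GL_n(R)_α`
compatibly with inclusions, and `St_n(R)` is the colimit because each Steinberg relation only
involves the positions of a closed set with at most three elements. -/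

open Matrix

variable {n : ℕ} {R : Type} [Ring R]

lemma elemMat_mul_elemMat_of_ne {i j k l : Fin n} (a b : R) (hjk : j ≠ k) :
    elemMat i j a * elemMat k l b = 1 + single i j a + single k l b := by
  simp [elemMat, mul_add, add_mul, single_mul_single_of_ne _ _ _ _ hjk, add_assoc]

lemma elemUnit_mul_elemUnit {i j : Fin n} (hij : i ≠ j) (a b : R) :
    elemUnit i j hij a * elemUnit i j hij b = elemUnit i j hij (a + b) := by
  ext : 1
  change elemMat i j a * elemMat i j b = elemMat i j (a + b)
  rw [elemMat_mul_elemMat_of_ne a b hij.symm, elemMat, single_add, add_assoc]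

lemma commute_elemUnit {i j k l : Fin n} (hij : i ≠ j) (hkl : k ≠ l) (hjk : j ≠ k) (hil : i ≠ l)
    (a b : R) : Commute (elemUnit i j hij a) (elemUnit k l hkl b) := by
  refine Units.ext ?_
  simp only [Units.val_mul, elemUnit, elemMat_mul_elemMat_of_ne a b hjk,
    elemMat_mul_elemMat_of_ne b a hil.symm]
  abel

lemma commutatorElement_elemUnit {i j l : Fin n} (hij : i ≠ j) (hjl : j ≠ l) (hil : i ≠ l)
    (a b : R) : ⁅elemUnit i j hij a, elemUnit j l hjl b⁆ = elemUnit i l hil (a * b) := by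
  rw [commutatorElement_def, mul_inv_eq_iff_eq_mul, mul_inv_eq_iff_eq_mul, mul_assoc]
  ext : 1
  change elemMat i j a * elemMat j l b = elemMat i l (a * b) * (elemMat j l b * elemMat i j a)
  rw [elemMat_mul_elemMat_of_ne b a hil.symm]
  simp [elemMat, mul_add, add_mul, single_mul_single_of_ne _ _ _ _ hjl.symm,
    single_mul_single_of_ne _ _ _ _ hil.symm]
  abel

def stGen (i j : Fin n) (hij : i ≠ j) (r : R) : Steinberg n R :=
  PresentedGroup.of (⟨(i, j), hij⟩, r)

namespace Steinberg

lemma mk_eq_one_of_mem_stRels {w : FreeGroup ({p : Fin n × Fin n // p ∈ deltaSet n} × R)}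
    (hw : w ∈ stRels n R (deltaSet n) fun i _ k _ _ hik => show (i, k) ∈ deltaSet n from hik) :
    PresentedGroup.mk _ w = (1 : Steinberg n R) :=
  (QuotientGroup.eq_one_iff _).2 (Subgroup.subset_normalClosure hw)

end Steinberg

lemma stGen_mul_stGen {i j : Fin n} (hij : i ≠ j) (a b : R) :
    stGen i j hij a * stGen i j hij b = stGen i j hij (a + b) := by
  have := Steinberg.mk_eq_one_of_mem_stRels (Or.inl (Or.inl ⟨⟨(i, j), hij⟩, a, b, rfl⟩))
  rwa [map_mul, map_mul, map_inv, mul_inv_eq_one] at this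

@[simp]
lemma stGen_zero {i j : Fin n} (hij : i ≠ j) : stGen i j hij (0 : R) = 1 := by
  simpa using stGen_mul_stGen hij (0 : R) 0

lemma inv_stGen {i j : Fin n} (hij : i ≠ j) (a : R) : (stGen i j hij a)⁻¹ = stGen i j hij (-a) :=
  inv_eq_of_mul_eq_one_right (by rw [stGen_mul_stGen, add_neg_cancel, stGen_zero])

lemma commute_stGen {i j k l : Fin n} (hij : i ≠ j) (hkl : k ≠ l) (hjk : j ≠ k) (hil : i ≠ l)
    (a b : R) : Commute (stGen i j hij a) (stGen k l hkl b) := by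
  have := Steinberg.mk_eq_one_of_mem_stRels
    (Or.inl (Or.inr ⟨⟨(i, j), hij⟩, ⟨(k, l), hkl⟩, a, b, hjk, hil, rfl⟩))
  rwa [map_commutatorElement, commutatorElement_eq_one_iff_commute] at this

lemma commutatorElement_stGen {i j l : Fin n} (hij : i ≠ j) (hjl : j ≠ l) (hil : i ≠ l)
    (a b : R) : ⁅stGen i j hij a, stGen j l hjl b⁆ = stGen i l hil (a * b) := by
  have := Steinberg.mk_eq_one_of_mem_stRels
    (Or.inr ⟨⟨(i, j), hij⟩, ⟨(j, l), hjl⟩, a, b, rfl, hil, rfl⟩)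
  rwa [map_mul, map_inv, map_commutatorElement, mul_inv_eq_one] at this

namespace Steinberg

variable {G : Type*} [Group G] (g : ∀ i j : Fin n, i ≠ j → R → G)
  (add : ∀ i j (hij : i ≠ j) (a b : R), g i j hij a * g i j hij b = g i j hij (a + b))
  (comm : ∀ i j k l (hij : i ≠ j) (hkl : k ≠ l), j ≠ k → i ≠ l → ∀ a b : R,
    Commute (g i j hij a) (g k l hkl b))
  (commutator : ∀ i j l (hij : i ≠ j) (hjl : j ≠ l) (hil : i ≠ l) (a b : R),
    ⁅g i j hij a, g j l hjl b⁆ = g i l hil (a * b))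

def lift : Steinberg n R →* G :=
  PresentedGroup.toGroup (f := fun x => g x.1.1.1 x.1.1.2 x.1.2 x.2) <| by
    rintro w ((⟨⟨⟨i, j⟩, hij⟩, a, b, rfl⟩ | ⟨⟨⟨i, j⟩, hij⟩, ⟨⟨k, l⟩, hkl⟩, a, b, hjk, hil, rfl⟩) |
      ⟨⟨⟨i, j⟩, hij⟩, ⟨⟨j', l⟩, hjl⟩, a, b, rfl : j = j', hil, rfl⟩)
    · simpa [mul_inv_eq_one] using add i j hij a b
    · simpa [commutatorElement_eq_one_iff_commute] using comm i j k l hij hkl hjk hil a b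
    · simpa [mul_inv_eq_one] using commutator i j l hij hjl hil a b

@[simp]
lemma lift_stGen {i j : Fin n} (hij : i ≠ j) (r : R) :
    lift g add comm commutator (stGen i j hij r) = g i j hij r :=
  PresentedGroup.toGroup.of _

end Steinberg

def stToGL : Steinberg n R →* (Matrix (Fin n) (Fin n) R)ˣ :=
  Steinberg.lift elemUnit (fun _ _ hij => elemUnit_mul_elemUnit hij)
    (fun _ _ _ _ hij hkl => commute_elemUnit hij hkl) (fun _ _ _ => commutatorElement_elemUnit)

@[simp]
lemma stToGL_stGen {i j : Fin n} (hij : i ≠ j) (r : R) :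
    stToGL (stGen i j hij r) = elemUnit i j hij r :=
  Steinberg.lift_stGen ..

variable (R) in
def stSub (α : Set (Fin n × Fin n)) : Subgroup (Steinberg n R) :=
  Subgroup.closure {g | ∃ (i j : Fin n) (hij : i ≠ j) (r : R), (i, j) ∈ α ∧ g = stGen i j hij r}

lemma stGen_mem_stSub {α : Set (Fin n × Fin n)} {i j : Fin n} (hij : i ≠ j) (r : R)
    (h : (i, j) ∈ α) : stGen i j hij r ∈ stSub R α :=
  Subgroup.subset_closure ⟨i, j, hij, r, h, rfl⟩

lemma elemUnit_mem_glSub {α : Set (Fin n × Fin n)} {i j : Fin n} (hij : i ≠ j) (r : R)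
    (h : (i, j) ∈ α) : elemUnit i j hij r ∈ glSub R α :=
  Subgroup.subset_closure ⟨i, j, hij, r, h, rfl⟩

lemma stSub_mono {α β : Set (Fin n × Fin n)} (h : α ⊆ β) : stSub R α ≤ stSub R β :=
  Subgroup.closure_mono fun _ ⟨i, j, hij, r, hα, hg⟩ => ⟨i, j, hij, r, h hα, hg⟩

lemma map_stToGL_stSub (α : Set (Fin n × Fin n)) : (stSub R α).map stToGL = glSub R α := by
  rw [stSub, MonoidHom.map_closure, glSub]
  congr 1
  ext u
  constructor
  · rintro ⟨_, ⟨i, j, hij, r, h, rfl⟩, rfl⟩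
    exact ⟨i, j, hij, r, h, stToGL_stGen hij r⟩
  · rintro ⟨i, j, hij, r, h, rfl⟩
    exact ⟨_, ⟨i, j, hij, r, h, rfl⟩, stToGL_stGen hij r⟩

namespace IsClosedSubset

variable {α : Set (Fin n × Fin n)}

lemma exists_indecomposable (hα : IsClosedSubset α) (hne : α.Nonempty) :
    ∃ i j, (i, j) ∈ α ∧ ∀ k, (i, k) ∈ α → (k, j) ∉ α := by
  let lt : Fin n → Fin n → Prop := fun a b => (a, b) ∈ α
  have : IsTrans (Fin n) lt := ⟨hα.2⟩
  have : Std.Irrefl lt := ⟨fun a h => hα.1 _ h rfl⟩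
  obtain ⟨p, hp, hmin⟩ :=
    (InvImage.wf Prod.snd (Finite.wellFounded_of_trans_of_irrefl lt)).has_min α hne
  exact ⟨p.1, p.2, hp, fun k hk hkp => hmin (p.1, k) hk hkp⟩

lemma diff_singleton (hα : IsClosedSubset α) {i j : Fin n}
    (hind : ∀ k, (i, k) ∈ α → (k, j) ∉ α) : IsClosedSubset (α \ {(i, j)}) := by
  refine ⟨fun p hp => hα.1 p hp.1, fun a b c hab hbc => ⟨hα.2 a b c hab.1 hbc.1, ?_⟩⟩
  rintro h
  obtain ⟨rfl, rfl⟩ := Prod.ext_iff.1 h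
  exact hind b hab.1 hbc.1

lemma pair {i j k l : Fin n} (hij : i ≠ j) (hkl : k ≠ l) (hjk : j ≠ k) (hil : i ≠ l) :
    IsClosedSubset {(i, j), (k, l)} := by
  refine ⟨?_, ?_⟩ <;> simp only [Set.mem_insert_iff, Set.mem_singleton_iff, Prod.mk.injEq] <;> grind

lemma triple {i j l : Fin n} (hij : i ≠ j) (hjl : j ≠ l) (hil : i ≠ l) :
    IsClosedSubset {(i, j), (j, l), (i, l)} := by
  refine ⟨?_, ?_⟩ <;> simp only [Set.mem_insert_iff, Set.mem_singleton_iff, Prod.mk.injEq] <;> grind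

lemma singleton {i j : Fin n} (hij : i ≠ j) : IsClosedSubset {(i, j)} := by
  simpa using pair hij hij hij.symm hij

end IsClosedSubset

def patternSubmonoid (α : Set (Fin n × Fin n)) (hα : IsClosedSubset α) :
    Submonoid (Matrix (Fin n) (Fin n) R) where
  carrier := {M | ∀ a b, (a, b) ∉ α → M a b = (1 : Matrix (Fin n) (Fin n) R) a b}
  one_mem' _ _ _ := rfl
  mul_mem' {M N} hM hN a b hab := by
    rw [mul_apply, Finset.sum_eq_single a, hM a a fun h => hα.1 _ h rfl, one_apply_eq, one_mul,
      hN a b hab]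
    · intro c _ hca
      by_cases hac : (a, c) ∈ α
      · have hcb : c ≠ b := by rintro rfl; exact hab hac
        rw [hN c b fun hcb' => hab (hα.2 a c b hac hcb'), one_apply_ne hcb, mul_zero]
      · rw [hM a c hac, one_apply_ne (Ne.symm hca), zero_mul]
    · simp

lemma stToGL_mem_patternSubmonoid {α : Set (Fin n × Fin n)} (hα : IsClosedSubset α)
    {g : Steinberg n R} (hg : g ∈ stSub R α) : (stToGL g).val ∈ patternSubmonoid α hα := by
  have hgen : ∀ i j (hij : i ≠ j) (r : R), (i, j) ∈ α →
      (stToGL (stGen i j hij r)).val ∈ patternSubmonoid α hα := by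
    intro i j hij r h a b hab
    have hne : ¬(i = a ∧ j = b) := fun ⟨hi, hj⟩ => hab (hi ▸ hj ▸ h)
    simp only [stToGL_stGen, elemUnit, elemMat, Matrix.add_apply, single_apply_of_ne _ _ _ _ _ hne,
      add_zero]
  induction hg using Subgroup.closure_induction'' with
  | mem _ h => obtain ⟨i, j, hij, r, h, rfl⟩ := h; exact hgen i j hij r h
  | inv_mem _ h =>
    obtain ⟨i, j, hij, r, h, rfl⟩ := h
    exact inv_stGen hij r ▸ hgen i j hij (-r) h
  | one => exact one_mem _
  | mul _ _ _ _ hx hy => simpa using mul_mem hx hy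

section Decomposition

variable {α : Set (Fin n × Fin n)} (hα : IsClosedSubset α) {i j : Fin n} (hij : i ≠ j)
  (hmem : (i, j) ∈ α)
include hα hmem

lemma inv_stGen_mul_stGen_mul_stGen_mem_stSub {k l : Fin n} (hkl : k ≠ l)
    (hq : (k, l) ∈ α \ {(i, j)}) (r s : R) :
    (stGen i j hij r)⁻¹ * stGen k l hkl s * stGen i j hij r ∈ stSub R (α \ {(i, j)}) := by
  by_cases hjk : j = k
  · subst hjk
    have hil : i ≠ l := hα.1 _ (hα.2 i j l hmem hq.1)
    have hil' : (i, l) ∈ α \ {(i, j)} :=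
      ⟨hα.2 i j l hmem hq.1, fun h => hkl (Prod.ext_iff.1 h).2.symm⟩
    rw [show (stGen i j hij r)⁻¹ * stGen j l hkl s * stGen i j hij r
        = ⁅(stGen i j hij r)⁻¹, stGen j l hkl s⁆ * stGen j l hkl s by group,
      inv_stGen, commutatorElement_stGen hij hkl hil]
    exact mul_mem (stGen_mem_stSub hil _ hil') (stGen_mem_stSub hkl _ hq)
  by_cases hli : l = i
  · subst hli
    have hkj : k ≠ j := hα.1 _ (hα.2 k l j hq.1 hmem)
    have hkj' : (k, j) ∈ α \ {(l, j)} :=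
      ⟨hα.2 k l j hq.1 hmem, fun h => hkl (Prod.ext_iff.1 h).1⟩
    rw [show (stGen l j hij r)⁻¹ * stGen k l hkl s * stGen l j hij r
        = ⁅stGen k l hkl s, (stGen l j hij r)⁻¹⁆⁻¹ * stGen k l hkl s by group,
      inv_stGen, commutatorElement_stGen hkl hij hkj]
    exact mul_mem (inv_mem (stGen_mem_stSub hkj _ hkj')) (stGen_mem_stSub hkl _ hq)
  · rw [mul_assoc, ← (commute_stGen hij hkl hjk (Ne.symm hli) r s).eq, inv_mul_cancel_left]
    exact stGen_mem_stSub hkl _ hq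

lemma exists_eq_stGen_mul_of_mem_stSub {g : Steinberg n R} (hg : g ∈ stSub R α) :
    ∃ r m, m ∈ stSub R (α \ {(i, j)}) ∧ g = stGen i j hij r * m := by
  have step : ∀ k l (hkl : k ≠ l) (s : R), (k, l) ∈ α → ∀ r m, m ∈ stSub R (α \ {(i, j)}) →
      ∃ r' m', m' ∈ stSub R (α \ {(i, j)}) ∧
        stGen k l hkl s * (stGen i j hij r * m) = stGen i j hij r' * m' := by
    intro k l hkl s hq r m hm
    by_cases h : (k, l) = (i, j)
    · obtain ⟨rfl, rfl⟩ := Prod.ext_iff.1 h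
      exact ⟨s + r, m, hm, by rw [← mul_assoc, stGen_mul_stGen]⟩
    · refine ⟨r, _, mul_mem (inv_stGen_mul_stGen_mul_stGen_mem_stSub hα hij hmem hkl ⟨hq, h⟩ r s)
        hm, by group⟩
  induction hg using Subgroup.closure_induction_left with
  | one => exact ⟨0, 1, one_mem _, by simp⟩
  | mul_left _ hx _ _ ih =>
    obtain ⟨k, l, hkl, s, hq, rfl⟩ := hx
    obtain ⟨r, m, hm, rfl⟩ := ih
    exact step k l hkl s hq r m hm
  | inv_mul_cancel _ hx _ _ ih =>
    obtain ⟨k, l, hkl, s, hq, rfl⟩ := hx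
    obtain ⟨r, m, hm, rfl⟩ := ih
    rw [inv_stGen]
    exact step k l hkl (-s) hq r m hm

end Decomposition

lemma eq_one_of_mem_stSub_of_stToGL_eq_one {α : Set (Fin n × Fin n)} (hα : IsClosedSubset α)
    {g : Steinberg n R} (hg : g ∈ stSub R α) (hφ : stToGL g = 1) : g = 1 := by
  induction α using WellFoundedLT.induction generalizing g with
  | _ α ih =>
    rcases α.eq_empty_or_nonempty with rfl | hne
    · simpa [stSub] using hg
    obtain ⟨i, j, hmem, hind⟩ := hα.exists_indecomposable hne
    have hij : i ≠ j := hα.1 _ hmem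
    have hα' := hα.diff_singleton hind
    obtain ⟨r, m, hm, rfl⟩ := exists_eq_stGen_mul_of_mem_stSub hα hij hmem hg
    have hM := stToGL_mem_patternSubmonoid hα' hm
    have hr : r = 0 := by
      have h := congrArg (fun u : (Matrix (Fin n) (Fin n) R)ˣ => u.val i j) hφ
      simp only [map_mul, Units.val_mul, stToGL_stGen, elemUnit, elemMat, add_mul, one_mul,
        Matrix.add_apply, single_mul_apply_same] at h
      have hjj : (j, j) ∉ α \ {(i, j)} := fun h => hα'.1 _ h rfl
      simpa [hM i j (by simp), hM j j hjj, one_apply_ne hij] using h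
    subst hr
    rw [stGen_zero, one_mul] at hφ ⊢
    exact ih _ (Set.sdiff_singleton_ssubset.2 hmem) hα' hm hφ

section Cocone

variable {α : Set (Fin n × Fin n)}

lemma injOn_stToGL_stSub (hα : IsClosedSubset α) :
    Set.InjOn stToGL (stSub R α : Set (Steinberg n R)) := by
  intro g hg g' hg' h
  rw [← mul_inv_eq_one]
  exact eq_one_of_mem_stSub_of_stToGL_eq_one hα (mul_mem hg (inv_mem hg'))
    (by rw [map_mul, map_inv, h, mul_inv_cancel])

noncomputable def stSubEquivGlSub (hα : IsClosedSubset α) : stSub R α ≃* glSub R α :=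
  (MulEquiv.ofBijective (stToGL.subgroupMap (stSub R α))
    ⟨fun x y h => Subtype.ext (injOn_stToGL_stSub hα x.2 y.2 (congrArg Subtype.val h)),
      stToGL.subgroupMap_surjective _⟩).trans
    (MulEquiv.subgroupCongr (map_stToGL_stSub α))

noncomputable def glSubToSt (hα : IsClosedSubset α) : glSub R α →* Steinberg n R :=
  (stSub R α).subtype.comp (stSubEquivGlSub hα).symm.toMonoidHom

lemma glSubToSt_mem (hα : IsClosedSubset α) (x : glSub R α) : glSubToSt hα x ∈ stSub R α :=
  ((stSubEquivGlSub hα).symm x).2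

@[simp]
lemma stToGL_glSubToSt (hα : IsClosedSubset α) (x : glSub R α) : stToGL (glSubToSt hα x) = x :=
  congrArg Subtype.val ((stSubEquivGlSub hα).apply_symm_apply x)

lemma glSubToSt_elemUnit (hα : IsClosedSubset α) {i j : Fin n} (hij : i ≠ j) (r : R)
    (h : (i, j) ∈ α) :
    glSubToSt hα ⟨elemUnit i j hij r, elemUnit_mem_glSub hij r h⟩ = stGen i j hij r :=
  injOn_stToGL_stSub hα (glSubToSt_mem hα _) (stGen_mem_stSub hij r h) (by simp)

lemma glSubToSt_of_subset (hα : IsClosedSubset α) {β : Set (Fin n × Fin n)}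
    (hβ : IsClosedSubset β) (hαβ : α ⊆ β)
    (x : (Matrix (Fin n) (Fin n) R)ˣ) (hxα : x ∈ glSub R α) (hxβ : x ∈ glSub R β) :
    glSubToSt hβ ⟨x, hxβ⟩ = glSubToSt hα ⟨x, hxα⟩ :=
  injOn_stToGL_stSub hβ (glSubToSt_mem hβ _) (stSub_mono hαβ (glSubToSt_mem hα _)) (by simp)

end Cocone

section UniversalProperty

variable {G : Type*} [Group G]
  (f : ∀ α : Set (Fin n × Fin n), IsClosedSubset α → (glSub R α →* G))

def IsGlSubCocone : Prop :=
  ∀ (α β : Set (Fin n × Fin n)) (hα : IsClosedSubset α) (hβ : IsClosedSubset β), α ⊆ β →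
    ∀ (x : (Matrix (Fin n) (Fin n) R)ˣ) (hxα : x ∈ glSub R α) (hxβ : x ∈ glSub R β),
      f β hβ ⟨x, hxβ⟩ = f α hα ⟨x, hxα⟩

variable {f} (hf : IsGlSubCocone f)
include hf

lemma IsGlSubCocone.apply_singleton {γ : Set (Fin n × Fin n)} (hγ : IsClosedSubset γ)
    {i j : Fin n} (hij : i ≠ j) (r : R) (h : (i, j) ∈ γ) :
    f {(i, j)} (.singleton hij) ⟨elemUnit i j hij r, elemUnit_mem_glSub hij r rfl⟩
      = f γ hγ ⟨elemUnit i j hij r, elemUnit_mem_glSub hij r h⟩ :=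
  (hf _ _ _ _ (Set.singleton_subset_iff.2 h) _ _ _).symm

noncomputable def IsGlSubCocone.lift : Steinberg n R →* G :=
  Steinberg.lift
    (fun i j hij r =>
      f {(i, j)} (.singleton hij) ⟨elemUnit i j hij r, elemUnit_mem_glSub hij r rfl⟩)
    (fun i j hij a b => by
      rw [← map_mul]
      exact congrArg _ (Subtype.ext (elemUnit_mul_elemUnit hij a b)))
    (fun i j k l hij hkl hjk hil a b => by
      have hγ := IsClosedSubset.pair hij hkl hjk hil
      rw [hf.apply_singleton hγ hij a (by simp), hf.apply_singleton hγ hkl b (by simp)]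
      exact Commute.map (Subtype.ext (commute_elemUnit hij hkl hjk hil a b).eq) _)
    (fun i j l hij hjl hil a b => by
      have hγ := IsClosedSubset.triple hij hjl hil
      rw [hf.apply_singleton hγ hij a (by simp), hf.apply_singleton hγ hjl b (by simp),
        hf.apply_singleton hγ hil (a * b) (by simp), ← map_commutatorElement]
      exact congrArg _ (Subtype.ext (commutatorElement_elemUnit hij hjl hil a b)))

lemma IsGlSubCocone.lift_stGen {i j : Fin n} (hij : i ≠ j) (r : R) :
    hf.lift (stGen i j hij r)
      = f {(i, j)} (.singleton hij) ⟨elemUnit i j hij r, elemUnit_mem_glSub hij r rfl⟩ :=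
  Steinberg.lift_stGen ..

lemma IsGlSubCocone.lift_glSubToSt {α : Set (Fin n × Fin n)} (hα : IsClosedSubset α)
    (x : glSub R α) : hf.lift (glSubToSt hα x) = f α hα x := by
  suffices hf.lift.comp (glSubToSt hα) = f α hα from DFunLike.congr_fun this x
  refine MonoidHom.eq_of_eqOn_dense Subgroup.closure_closure_coe_preimage ?_
  rintro ⟨_, _⟩ ⟨i, j, hij, r, h, rfl⟩
  change hf.lift (glSubToSt hα ⟨_, elemUnit_mem_glSub hij r h⟩) = f α hα ⟨_, _⟩
  rw [glSubToSt_elemUnit hα hij r h, hf.lift_stGen, hf.apply_singleton hα hij r h]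

lemma IsGlSubCocone.eq_lift (φ : Steinberg n R →* G)
    (hφ : ∀ (α : Set (Fin n × Fin n)) (hα : IsClosedSubset α) (x : glSub R α),
      φ (glSubToSt hα x) = f α hα x) : φ = hf.lift := by
  refine PresentedGroup.ext fun ⟨⟨(i, j), hij⟩, r⟩ => ?_
  have h := hφ {(i, j)} (.singleton hij) ⟨elemUnit i j hij r, elemUnit_mem_glSub hij r rfl⟩
  rw [glSubToSt_elemUnit (.singleton hij) hij r rfl] at h
  exact h.trans (hf.lift_stGen hij r).symm

end UniversalProperty

/-- there is a group isomorphism `St_n(R) ≅ colim_{α ∈ Φ} GL_n(R)_α` under which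
the canonical homomorphism `colim_{α ∈ Φ} GL_n(R)_α → GL_n(R)` (induced by the inclusions
`GL_n(R)_α ≤ GL_n(R)`) corresponds to the homomorphism `φ : St_n(R) → GL_n(R)` with
`φ(x_{ij}(r)) = ε_{ij}(r)`.  Equivalently, as stated here: `St_n(R)` carries a cocone
`κ_α : GL_n(R)_α → St_n(R)` compatible with the inclusions `GL_n(R)_α ↪ GL_n(R)_β`, this
cocone satisfies the universal property of the colimit, and `φ ∘ κ_α` is the inclusion
`GL_n(R)_α ≤ GL_n(R)` (so that `φ` is the canonical homomorphism out of the colimit). -/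
theorem steinberg_iso_colimit_glSub (n : ℕ) (R : Type) [Ring R] :
    ∃ φ : Steinberg n R →* (Matrix (Fin n) (Fin n) R)ˣ,
      (∀ (p : {p : Fin n × Fin n // p ∈ deltaSet n}) (r : R),
          φ (PresentedGroup.of (p, r)) = elemUnit p.1.1 p.1.2 p.2 r) ∧
      ∃ κ : ∀ (α : Set (Fin n × Fin n)), IsClosedSubset α → (glSub R α →* Steinberg n R),
        (∀ (α β : Set (Fin n × Fin n)) (hα : IsClosedSubset α) (hβ : IsClosedSubset β),
          α ⊆ β → ∀ (x : (Matrix (Fin n) (Fin n) R)ˣ) (hxα : x ∈ glSub R α)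
            (hxβ : x ∈ glSub R β), κ β hβ ⟨x, hxβ⟩ = κ α hα ⟨x, hxα⟩) ∧
        (∀ (α : Set (Fin n × Fin n)) (hα : IsClosedSubset α) (x : glSub R α),
          φ (κ α hα x) = x.1) ∧
        ∀ (G : Type) [Group G] (f : ∀ α : Set (Fin n × Fin n), IsClosedSubset α → (glSub R α →* G)),
          (∀ (α β : Set (Fin n × Fin n)) (hα : IsClosedSubset α) (hβ : IsClosedSubset β),
            α ⊆ β → ∀ (x : (Matrix (Fin n) (Fin n) R)ˣ) (hxα : x ∈ glSub R α)
              (hxβ : x ∈ glSub R β), f β hβ ⟨x, hxβ⟩ = f α hα ⟨x, hxα⟩) →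
          ∃! h : Steinberg n R →* G,
            ∀ (α : Set (Fin n × Fin n)) (hα : IsClosedSubset α) (x : glSub R α),
              h (κ α hα x) = f α hα x := by
  refine ⟨stToGL, fun p r => stToGL_stGen p.2 r, fun α hα => glSubToSt hα,
    fun α β hα hβ hαβ => glSubToSt_of_subset hα hβ hαβ, fun α hα => stToGL_glSubToSt hα, ?_⟩
  intro G _ f (hf : IsGlSubCocone f)
  exact ⟨hf.lift, fun α hα => hf.lift_glSubToSt hα, hf.eq_lift⟩
end

section
/- Let G be a group and H = {H_i : i ∈ Φ} a family of subgroups of G. For x, y ∈ G, x and y are free path equivalent — i.e., related by the equivalence relation on G generated by the pairs (u, hu) where u ∈ G, i ∈ Φ and h ∈ H_i — if and only if y·x⁻¹ lies in ⟨H⟩, the subgroup of G generated by ⋃_{i∈Φ} H_i. Consequently π₀(A(G,H)), the set of free-path components of the single domain global action A(G,H), is in bijection with the coset space G/⟨H⟩, i.e., with the set of cosets {⟨H⟩·x : x ∈ G}. -/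
/-- The one-step relation of the single domain global action `A(G, H)`: `v` is obtained
from `u` by left multiplication by an element of one of the subgroups `H i`. -/
def hStep {G : Type*} [Group G] {Φ : Type*} (H : Φ → Subgroup G) (u v : G) : Prop :=
  ∃ i : Φ, ∃ h ∈ H i, v = h * u

/-- for a group `G` and a family `H = {H_i : i ∈ Φ}` of subgroups, `x, y ∈ G`
are free path equivalent (related by the equivalence relation generated by the pairs
`(u, hu)` with `h ∈ H_i` for some `i`) if and only if `y x⁻¹ ∈ ⟨H⟩`, the subgroup generated
by `⋃_i H_i`; consequently `π₀(A(G,H))` is in bijection with the coset space `G/⟨H⟩`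
(the set of right cosets `⟨H⟩x`). -/
theorem pi0_single_domain {G : Type*} [Group G] {Φ : Type*} (H : Φ → Subgroup G) :
    (∀ x y : G,
        Relation.EqvGen (hStep H) x y ↔ y * x⁻¹ ∈ Subgroup.closure (⋃ i : Φ, (H i : Set G))) ∧
      Nonempty (Quot (hStep H) ≃
        Quotient (QuotientGroup.rightRel (Subgroup.closure (⋃ i : Φ, (H i : Set G))))) := by
  set N := Subgroup.closure (⋃ i : Φ, (H i : Set G)) with hN
  have key : ∀ x y : G, Relation.EqvGen (hStep H) x y ↔ y * x⁻¹ ∈ N := by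
    have back : ∀ n ∈ N, ∀ x : G, Relation.EqvGen (hStep H) x (n * x) := by
      intro n hn
      induction hn using Subgroup.closure_induction with
      | mem h hh =>
        intro x
        rcases Set.mem_iUnion.mp hh with ⟨i, hi⟩
        exact Relation.EqvGen.rel _ _ ⟨i, h, hi, rfl⟩
      | one => intro x; rw [one_mul]; exact Relation.EqvGen.refl x
      | mul a b _ _ ha hb =>
        intro x
        have := (hb x).trans _ _ _ (ha (b * x))
        rwa [← mul_assoc] at this
      | inv a _ ha =>
        intro x
        have := ha (a⁻¹ * x)
        rw [← mul_assoc, mul_inv_cancel, one_mul] at this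
        exact this.symm _ _
    intro x y
    constructor
    · intro h
      induction h with
      | rel u v huv =>
        rcases huv with ⟨i, h, hi, rfl⟩
        simpa using Subgroup.subset_closure (Set.mem_iUnion.mpr ⟨i, hi⟩)
      | refl => simpa using N.one_mem
      | symm u v _ ih => simpa using N.inv_mem ih
      | trans u v w _ _ ih1 ih2 =>
        have := N.mul_mem ih2 ih1
        simpa [mul_assoc] using this
    · intro h
      have := back _ h x
      rwa [inv_mul_cancel_right] at this
  refine ⟨key, ⟨?_⟩⟩
  refine
    { toFun := Quot.lift (fun x => Quotient.mk (QuotientGroup.rightRel N) x) ?_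
      invFun := Quotient.lift (fun x => Quot.mk (hStep H) x) ?_
      left_inv := ?_
      right_inv := ?_ }
  · intro a b hab
    exact Quotient.sound ((QuotientGroup.rightRel_apply).mpr
      ((key a b).mp (Relation.EqvGen.rel a b hab)))
  · intro a b hab
    exact Quot.eqvGen_sound ((key a b).mpr ((QuotientGroup.rightRel_apply).mp hab))
  · intro q; induction q using Quot.ind; rfl
  · intro q; induction q using Quotient.ind; rfl
end

section
/- Let σ = {H_{α_0}x_0, …, H_{α_n}x_n} be a simplex of N(A(G,H)) whose vertices are cosets of pairwise distinct subgroups (the indices α_0, …, α_n are pairwise distinct), and let a ∈ ⋂σ. Then the stabilizer of σ under the right-translation action of G, Stab_G(σ) = {g ∈ G : σ·g = σ}, is equal to the conjugate a⁻¹(⋂_{k=0}^{n} H_{α_k})a. -/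
/-- The right coset `H_i x`, as a subset of `G`. -/
def coset {G : Type*} [Group G] {Φ : Type*} (H : Φ → Subgroup G) (i : Φ) (x : G) : Set G :=
  {g | ∃ h ∈ H i, g = h * x}

/-- Right translation of a subset of `G` by an element `g`. -/
def rightTranslate {G : Type*} [Group G] (s : Set G) (g : G) : Set G :=
  {y | ∃ z ∈ s, y = z * g}

lemma mem_coset_iff {G : Type*} [Group G] {Φ : Type*} (H : Φ → Subgroup G) (i : Φ) (x g : G) :
    g ∈ coset H i x ↔ g * x⁻¹ ∈ H i := by
  constructor
  · rintro ⟨h, hh, rfl⟩; simpa using hh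
  · intro h; exact ⟨g * x⁻¹, h, by group⟩

lemma rightTranslate_coset {G : Type*} [Group G] {Φ : Type*} (H : Φ → Subgroup G) (i : Φ)
    (x g : G) : rightTranslate (coset H i x) g = coset H i (x * g) := by
  ext y
  constructor
  · rintro ⟨z, ⟨h, hh, rfl⟩, rfl⟩; exact ⟨h, hh, by group⟩
  · rintro ⟨h, hh, rfl⟩; exact ⟨h * x, ⟨h, hh, rfl⟩, by group⟩

lemma coset_eq_subgroup {G : Type*} [Group G] {Φ : Type*} (H : Φ → Subgroup G) {i j : Φ}
    {x y : G} (h : coset H i x = coset H j y) : H i = H j := by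
  have hx : x ∈ coset H i x := ⟨1, (H i).one_mem, (one_mul x).symm⟩
  have hxy : x * y⁻¹ ∈ H j := by rw [h, mem_coset_iff] at hx; exact hx
  have hy : y ∈ coset H j y := ⟨1, (H j).one_mem, (one_mul y).symm⟩
  have hyx : y * x⁻¹ ∈ H i := by rw [← h, mem_coset_iff] at hy; exact hy
  ext g
  constructor
  · intro hg
    have h1 : g * x ∈ coset H i x := ⟨g, hg, rfl⟩
    rw [h, mem_coset_iff] at h1
    have h2 := (H j).mul_mem h1 ((H j).inv_mem hxy)
    have e : g * x * y⁻¹ * (x * y⁻¹)⁻¹ = g := by group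
    rwa [e] at h2
  · intro hg
    have h1 : g * y ∈ coset H j y := ⟨g, hg, rfl⟩
    rw [← h, mem_coset_iff] at h1
    have h2 := (H i).mul_mem h1 ((H i).inv_mem hyx)
    have e : g * y * x⁻¹ * (y * x⁻¹)⁻¹ = g := by group
    rwa [e] at h2

lemma coset_eq_iff {G : Type*} [Group G] {Φ : Type*} (H : Φ → Subgroup G) (i : Φ) (x y : G) :
    coset H i x = coset H i y ↔ x * y⁻¹ ∈ H i := by
  constructor
  · intro h
    have hx : x ∈ coset H i x := ⟨1, (H i).one_mem, (one_mul x).symm⟩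
    rw [h, mem_coset_iff] at hx; exact hx
  · intro h
    ext g
    rw [mem_coset_iff, mem_coset_iff]
    constructor
    · intro hg
      have h2 := (H i).mul_mem hg h
      have e : g * x⁻¹ * (x * y⁻¹) = g * y⁻¹ := by group
      rwa [e] at h2
    · intro hg
      have h2 := (H i).mul_mem hg ((H i).inv_mem h)
      have e : g * y⁻¹ * (x * y⁻¹)⁻¹ = g * x⁻¹ := by group
      rwa [e] at h2

/-- let `σ = {H_{α₀}x₀, …, H_{αₙ}xₙ}` be a simplex of the nerve `N(A(G,H))`
whose vertices are cosets of pairwise distinct subgroups, and let `a ∈ ⋂σ`.  Then the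
stabilizer of `σ` under the right-translation action of `G` equals the conjugate
`a⁻¹ (⋂ₖ H_{αₖ}) a`. -/
theorem stabilizer_of_simplex {G : Type*} [Group G] {Φ : Type*} (H : Φ → Subgroup G)
    (hH : Function.Injective H) {m : ℕ} (α : Fin (m + 1) → Φ) (hα : Function.Injective α)
    (x : Fin (m + 1) → G) (a : G) (ha : ∀ k, a ∈ coset H (α k) (x k)) :
    {g : G |
        (Set.range fun k => rightTranslate (coset H (α k) (x k)) g) =
          Set.range fun k => coset H (α k) (x k)} =
      {g : G | ∃ h : G, (∀ k, h ∈ H (α k)) ∧ g = a⁻¹ * h * a} := by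
  -- For each k, pick hₖ ∈ H (α k) with a = hₖ * x k
  ext g
  simp only [Set.mem_setOf_eq]
  constructor
  · intro hrange
    -- each translated coset equals the original coset with the same index
    have key : ∀ k, x k * g * (x k)⁻¹ ∈ H (α k) := by
      intro k
      have hmem : rightTranslate (coset H (α k) (x k)) g ∈
          Set.range fun k => coset H (α k) (x k) := by
        rw [← hrange]; exact ⟨k, rfl⟩
      obtain ⟨j, hj⟩ := hmem
      rw [rightTranslate_coset] at hj
      have hij : α j = α k := hH (coset_eq_subgroup H hj)
      have hjk : j = k := hα hij
      subst hjk
      have hj' : coset H (α j) (x j * g) = coset H (α j) (x j) := hj.symm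
      exact (coset_eq_iff H (α j) (x j * g) (x j)).mp hj'
    refine ⟨a * g * a⁻¹, ?_, by group⟩
    intro k
    obtain ⟨h, hh, hax⟩ := ha k
    have : a * g * a⁻¹ = h * (x k * g * (x k)⁻¹) * h⁻¹ := by rw [hax]; group
    rw [this]
    exact (H (α k)).mul_mem ((H (α k)).mul_mem hh (key k)) ((H (α k)).inv_mem hh)
  · rintro ⟨h, hh, rfl⟩
    have key : ∀ k, rightTranslate (coset H (α k) (x k)) (a⁻¹ * h * a) =
        coset H (α k) (x k) := by
      intro k
      rw [rightTranslate_coset, coset_eq_iff]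
      obtain ⟨hk, hhk, hax⟩ := ha k
      have : x k * (a⁻¹ * h * a) * (x k)⁻¹ = hk⁻¹ * h * hk := by rw [hax]; group
      rw [this]
      exact (H (α k)).mul_mem ((H (α k)).mul_mem ((H (α k)).inv_mem hhk) (hh k)) hhk
    have : (fun k => rightTranslate (coset H (α k) (x k)) (a⁻¹ * h * a)) =
        fun k => coset H (α k) (x k) := funext key
    rw [this]
end

section
/- Suppose ψ assigns to every simplex t of L_R an element ψ(t) ∈ X such that ψ(t) R y for all y ∈ t. Then ψ defines a simplicial map from the barycentric subdivision L'_R to K_R: for every simplex of L'_R, i.e., every finite nonempty chain t_0 ⊆ t_1 ⊆ … ⊆ t_q of simplices of L_R, the set {ψ(t_0), …, ψ(t_q)} is a simplex of K_R. -/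
/-- A simplex of the Dowker complex `K_R`: a finite nonempty subset `s ⊆ X` such that some
`y ∈ Y` is related to every element of `s`. -/
def KSimp {X Y : Type*} (R : X → Y → Prop) (s : Set X) : Prop :=
  s.Finite ∧ s.Nonempty ∧ ∃ y : Y, ∀ x ∈ s, R x y

/-- A simplex of the dual Dowker complex `L_R`: a finite nonempty subset `t ⊆ Y` such that
some `x ∈ X` is related to every element of `t`. -/
def LSimp {X Y : Type*} (R : X → Y → Prop) (t : Set Y) : Prop :=
  t.Finite ∧ t.Nonempty ∧ ∃ x : X, ∀ y ∈ t, R x y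

theorem IsChain.exists_isLeast_of_finite {α : Type*} [Preorder α] {s : Set α}
    (hs : IsChain (· ≤ ·) s) (hfin : s.Finite) (hne : s.Nonempty) : ∃ a, IsLeast s a := by
  obtain ⟨a, ha⟩ := hfin.exists_minimal hne
  exact ⟨a, (IsChain.directedOn (r := (· ≥ ·)) hs.symm).minimal_iff_isLeast.mp ha⟩

/-- if `ψ` assigns to every simplex `t` of `L_R` an element `ψ(t) ∈ X` with
`ψ(t) R y` for all `y ∈ t`, then `ψ` defines a simplicial map from the barycentric
subdivision `L'_R` to `K_R`: for every finite nonempty chain `C` of simplices of `L_R`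
(ordered by inclusion), the image `ψ '' C` is a simplex of `K_R`. -/
theorem dowker_simplicial_map {X Y : Type*} (R : X → Y → Prop) (ψ : Set Y → X)
    (hψ : ∀ t : Set Y, LSimp R t → ∀ y ∈ t, R (ψ t) y)
    (C : Set (Set Y)) (hCfin : C.Finite) (hCne : C.Nonempty)
    (hCsimp : ∀ t ∈ C, LSimp R t) (hchain : IsChain (· ⊆ ·) C) :
    KSimp R (ψ '' C) := by
  obtain ⟨t₀, ht₀⟩ := hchain.exists_isLeast_of_finite hCfin hCne
  obtain ⟨y, hy⟩ := (hCsimp t₀ ht₀.1).2.1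
  refine ⟨hCfin.image ψ, hCne.image ψ, y, ?_⟩
  rintro _ ⟨t, htC, rfl⟩
  exact hψ t (hCsimp t htC) y (ht₀.2 htC hy)
end

section
/- Let a = (1 2 3) and b = (1 2) in the symmetric group S_3, let H_1 = ⟨a⟩ (cyclic of order 3) and H_2 = ⟨b⟩ (cyclic of order 2), and let p : H_1 ∗ H_2 → S_3 be the homomorphism from the free product induced by the inclusions H_1, H_2 ≤ S_3. Then p is surjective, its kernel is the normal closure in H_1 ∗ H_2 of the single element (ι_1(a)·ι_2(b))², and Ker p is a free group of rank 2 (isomorphic to the free group on two generators). -/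
open Monoid

/-- The 3-cycle `a = (1 2 3)` in `S₃`. -/
def aPerm : Equiv.Perm (Fin 3) := finRotate 3

/-- The transposition `b = (1 2)` in `S₃`. -/
def bPerm : Equiv.Perm (Fin 3) := Equiv.swap 0 1

/-- The homomorphism `p : H₁ ∗ H₂ → S₃` from the free product of `H₁ = ⟨a⟩` and
`H₂ = ⟨b⟩` induced by the inclusions `H₁, H₂ ≤ S₃`. -/
def pS3 : Coprod (Subgroup.zpowers aPerm) (Subgroup.zpowers bPerm) →* Equiv.Perm (Fin 3) :=
  Coprod.lift (Subgroup.zpowers aPerm).subtype (Subgroup.zpowers bPerm).subtype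

namespace S3FP
abbrev S3 := Equiv.Perm (Fin 3)
abbrev F2 := FreeGroup (Fin 2)
abbrev G := Coprod (Subgroup.zpowers aPerm) (Subgroup.zpowers bPerm)

def aEl : Subgroup.zpowers aPerm := ⟨aPerm, Subgroup.mem_zpowers aPerm⟩
def bEl : Subgroup.zpowers bPerm := ⟨bPerm, Subgroup.mem_zpowers bPerm⟩
def a' : G := Coprod.inl aEl
def b' : G := Coprod.inr bEl

/-- action of S3 on functions S3 → F2 by left translation -/
def act : S3 →* MulAut (S3 → F2) where
  toFun σ :=
    { toFun := fun f x => f (σ⁻¹ * x)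
      invFun := fun f x => f (σ * x)
      left_inv := fun f => funext fun x => by simp [← mul_assoc]
      right_inv := fun f => funext fun x => by simp [← mul_assoc]
      map_mul' := fun f g => rfl }
  map_one' := by ext f x; simp
  map_mul' := fun σ τ => by ext f x; simp [mul_assoc]

lemma act_apply (σ : S3) (f : S3 → F2) (x : S3) : act σ f x = f (σ⁻¹ * x) := rfl

abbrev W := SemidirectProduct (S3 → F2) S3 act

def x0 : F2 := FreeGroup.of 0
def y0 : F2 := FreeGroup.of 1

def cB : S3 → F2 := fun σ =>
  if σ = aPerm then y0⁻¹
  else if σ = aPerm * aPerm then x0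
  else if σ = aPerm * bPerm then x0⁻¹
  else if σ = aPerm * aPerm * bPerm then y0
  else 1

def A : W := SemidirectProduct.inr aPerm
def B : W := ⟨cB, bPerm⟩

lemma cB_one : cB 1 = 1 := by
  unfold cB; rw [if_neg (by decide), if_neg (by decide), if_neg (by decide), if_neg (by decide)]
lemma cB_a : cB aPerm = y0⁻¹ := by unfold cB; rw [if_pos rfl]
lemma cB_a2 : cB (aPerm * aPerm) = x0 := by
  unfold cB; rw [if_neg (by decide), if_pos rfl]
lemma cB_b : cB bPerm = 1 := by
  unfold cB; rw [if_neg (by decide), if_neg (by decide), if_neg (by decide), if_neg (by decide)]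
lemma cB_ab : cB (aPerm * bPerm) = x0⁻¹ := by
  unfold cB; rw [if_neg (by decide), if_neg (by decide), if_pos rfl]
lemma cB_a2b : cB (aPerm * aPerm * bPerm) = y0 := by
  unfold cB; rw [if_neg (by decide), if_neg (by decide), if_neg (by decide), if_pos rfl]

lemma memA : ∀ g ∈ Subgroup.zpowers aPerm, g = 1 ∨ g = aPerm ∨ g = aPerm * aPerm := by
  intro g hg
  obtain ⟨k, rfl⟩ := Subgroup.mem_zpowers_iff.mp hg
  have h3 : aPerm ^ (3 : ℤ) = 1 := by decide
  have hm : aPerm ^ k = aPerm ^ (k % 3) := by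
    conv_lhs => rw [← Int.emod_add_mul_ediv k 3]
    rw [zpow_add, zpow_mul, h3, one_zpow, mul_one]
  have hr : k % 3 = 0 ∨ k % 3 = 1 ∨ k % 3 = 2 := by omega
  rcases hr with h | h | h <;> rw [hm, h] <;> simp [zpow_ofNat] <;> decide
lemma memB : ∀ g ∈ Subgroup.zpowers bPerm, g = 1 ∨ g = bPerm := by
  intro g hg
  obtain ⟨k, rfl⟩ := Subgroup.mem_zpowers_iff.mp hg
  have h2 : bPerm ^ (2 : ℤ) = 1 := by decide
  have hm : bPerm ^ k = bPerm ^ (k % 2) := by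
    conv_lhs => rw [← Int.emod_add_mul_ediv k 2]
    rw [zpow_add, zpow_mul, h2, one_zpow, mul_one]
  have hr : k % 2 = 0 ∨ k % 2 = 1 := by omega
  rcases hr with h | h <;> rw [hm, h] <;> simp

lemma S3cases : ∀ x : S3, x = 1 ∨ x = aPerm ∨ x = aPerm * aPerm ∨ x = bPerm ∨
    x = aPerm * bPerm ∨ x = aPerm * aPerm * bPerm := by decide

lemma B_sq : B * B = 1 := by
  have hleft : (B * B).left = 1 := by
    funext x
    rw [SemidirectProduct.mul_left]
    show cB x * cB (bPerm⁻¹ * x) = 1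
    rcases S3cases x with h | h | h | h | h | h <;> subst h
    · rw [show bPerm⁻¹ * (1:S3) = bPerm from by decide, cB_one, cB_b]; simp
    · rw [show bPerm⁻¹ * aPerm = aPerm * aPerm * bPerm from by decide, cB_a, cB_a2b]; simp
    · rw [show bPerm⁻¹ * (aPerm * aPerm) = aPerm * bPerm from by decide, cB_a2, cB_ab]; simp
    · rw [show bPerm⁻¹ * bPerm = 1 from by decide, cB_b, cB_one]; simp
    · rw [show bPerm⁻¹ * (aPerm * bPerm) = aPerm * aPerm from by decide, cB_ab, cB_a2]; simp
    · rw [show bPerm⁻¹ * (aPerm * aPerm * bPerm) = aPerm from by decide, cB_a2b, cB_a]; simp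
  have hright : (B * B).right = 1 := by
    rw [SemidirectProduct.mul_right]; show bPerm * bPerm = 1; decide
  ext
  · rw [hleft]; rfl
  · rw [hright]; rfl

def fA : (Subgroup.zpowers aPerm) →* W :=
  SemidirectProduct.inr.comp (Subgroup.zpowers aPerm).subtype

def fB : (Subgroup.zpowers bPerm) →* W where
  toFun g := if (g : S3) = bPerm then B else 1
  map_one' := by
    show (if ((1 : Subgroup.zpowers bPerm) : S3) = bPerm then B else 1) = 1
    rw [if_neg (by decide)]
  map_mul' := fun g h => by
    rcases memB g.1 g.2 with hg | hg <;> rcases memB h.1 h.2 with hh | hh <;>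
      simp only [Subgroup.coe_mul, hg, hh]
    · simp only [if_neg (show ¬ (1:S3) = bPerm from by decide)]
      rw [if_neg (show ¬ (1:S3) * 1 = bPerm from by decide), one_mul]
    · rw [if_pos (by decide), if_neg (by decide), if_pos (by decide), one_mul]
    · rw [if_pos (by decide), if_pos (by decide), if_neg (by decide), mul_one]
    · exact B_sq.symm

def Φ : G →* W := Coprod.lift fA fB

def s : S3 → G := fun σ =>
  if σ = aPerm then a'
  else if σ = aPerm * aPerm then a' * a'
  else if σ = bPerm then b'
  else if σ = aPerm * bPerm then a' * b'
  else if σ = aPerm * aPerm * bPerm then a' * a' * b'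
  else 1

lemma s_one : s 1 = 1 := by
  unfold s
  rw [if_neg (by decide), if_neg (by decide), if_neg (by decide), if_neg (by decide),
    if_neg (by decide)]
lemma s_a : s aPerm = a' := by unfold s; rw [if_pos rfl]
lemma s_a2 : s (aPerm * aPerm) = a' * a' := by unfold s; rw [if_neg (by decide), if_pos rfl]
lemma s_b : s bPerm = b' := by
  unfold s; rw [if_neg (by decide), if_neg (by decide), if_pos rfl]
lemma s_ab : s (aPerm * bPerm) = a' * b' := by
  unfold s; rw [if_neg (by decide), if_neg (by decide), if_neg (by decide), if_pos rfl]
lemma s_a2b : s (aPerm * aPerm * bPerm) = a' * a' * b' := by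
  unfold s
  rw [if_neg (by decide), if_neg (by decide), if_neg (by decide), if_neg (by decide), if_pos rfl]

def k1 : G := a' * (b' * (a' * b'))
def k2 : G := b' * (a' * (b' * a'))

def ρ : F2 →* G := FreeGroup.lift (fun i : Fin 2 => if i = 0 then k1 else k2)

lemma ρ_x0 : ρ x0 = k1 := by rw [ρ, x0, FreeGroup.lift_apply_of, if_pos rfl]
lemma ρ_y0 : ρ y0 = k2 := by rw [ρ, y0, FreeGroup.lift_apply_of, if_neg (by decide)]

lemma haaa : a' * (a' * a') = 1 := by
  have h : aEl * (aEl * aEl) = 1 := Subtype.ext (by decide)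
  show Coprod.inl aEl * (Coprod.inl aEl * Coprod.inl aEl) = 1
  rw [← map_mul, ← map_mul, h, map_one]

lemma hbb : b' * b' = 1 := by
  have h : bEl * bEl = 1 := Subtype.ext (by decide)
  show Coprod.inr bEl * Coprod.inr bEl = 1
  rw [← map_mul, h, map_one]

lemma ainv : a'⁻¹ = a' * a' := inv_eq_of_mul_eq_one_right haaa
lemma binv : b'⁻¹ = b' := inv_eq_of_mul_eq_one_right hbb

lemma cancelA : ∀ t : G, a' * (a' * (a' * t)) = t := fun t => by
  rw [show a' * (a' * (a' * t)) = (a' * (a' * a')) * t by simp [mul_assoc], haaa, one_mul]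
lemma cancelB : ∀ t : G, b' * (b' * t) = t := fun t => by
  rw [← mul_assoc, hbb, one_mul]

lemma pa : pS3 a' = aPerm := by
  rw [pS3, a', Coprod.lift_apply_inl]; rfl
lemma pb : pS3 b' = bPerm := by
  rw [pS3, b', Coprod.lift_apply_inr]; rfl

lemma phi_a : Φ a' = SemidirectProduct.inr aPerm := by
  rw [Φ, a', Coprod.lift_apply_inl]; rfl
lemma phi_b : Φ b' = B := by
  rw [Φ, b', Coprod.lift_apply_inr]
  show (if (bEl : S3) = bPerm then B else 1) = B
  rw [if_pos (show (bEl : S3) = bPerm from rfl)]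

lemma right_phi : ∀ g : G, (Φ g).right = pS3 g := by
  intro g
  induction g using Coprod.induction_on with
  | inl m => rfl
  | inr n =>
    rw [show Φ (Coprod.inr n) = fB n from by rw [Φ, Coprod.lift_apply_inr],
      show pS3 (Coprod.inr n) = (n : S3) from by rw [pS3, Coprod.lift_apply_inr]; rfl]
    rcases memB n.1 n.2 with h | h
    · rw [show fB n = if (n : S3) = bPerm then B else 1 from rfl, h, if_neg (by decide)]; rfl
    · rw [show fB n = if (n : S3) = bPerm then B else 1 from rfl, h, if_pos rfl]; rfl
  | mul x y hx hy =>
    rw [map_mul, SemidirectProduct.mul_right, map_mul, hx, hy]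

def RInv (g : G) : Prop := ∀ x : S3, ρ ((Φ g).left x) = (s x)⁻¹ * g * s ((pS3 g)⁻¹ * x)

lemma rinv_mul {g h : G} (hg : RInv g) (hh : RInv h) : RInv (g * h) := by
  intro x
  rw [map_mul, SemidirectProduct.mul_left, Pi.mul_apply, map_mul, act_apply, right_phi,
    hg x, hh ((pS3 g)⁻¹ * x), map_mul, mul_inv_rev]
  group

lemma rinv_one : RInv 1 := by
  intro x
  rw [map_one pS3, map_one Φ, SemidirectProduct.one_left, Pi.one_apply, map_one]
  group

lemma rinv_a : RInv a' := by
  intro x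
  rw [phi_a, pa]
  rw [show (SemidirectProduct.inr aPerm : W).left = 1 from rfl, Pi.one_apply, map_one]
  rcases S3cases x with h | h | h | h | h | h <;> subst h
  · rw [show aPerm⁻¹ * (1:S3) = aPerm * aPerm from by decide, s_one, s_a2]
    simp [mul_assoc, haaa]
  · rw [show aPerm⁻¹ * aPerm = 1 from by decide, s_one, s_a]
    simp
  · rw [show aPerm⁻¹ * (aPerm * aPerm) = aPerm from by decide, s_a2, s_a]
    simp [mul_assoc]
  · rw [show aPerm⁻¹ * bPerm = aPerm * aPerm * bPerm from by decide, s_b, s_a2b]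
    simp [mul_assoc, cancelA]
  · rw [show aPerm⁻¹ * (aPerm * bPerm) = bPerm from by decide, s_ab, s_b]
    simp [mul_assoc]
  · rw [show aPerm⁻¹ * (aPerm * aPerm * bPerm) = aPerm * bPerm from by decide, s_a2b, s_ab]
    simp [mul_assoc, cancelA]

lemma rinv_b : RInv b' := by
  intro x
  rw [phi_b, pb, show (B : W).left = cB from rfl]
  rcases S3cases x with h | h | h | h | h | h <;> subst h
  · rw [show bPerm⁻¹ * (1:S3) = bPerm from by decide, s_one, s_b, cB_one, map_one]
    simp [hbb]
  · rw [show bPerm⁻¹ * aPerm = aPerm * aPerm * bPerm from by decide, s_a, s_a2b, cB_a,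
      map_inv, ρ_y0, k2]
    simp [mul_inv_rev, ainv, binv, mul_assoc, cancelA, cancelB]
  · rw [show bPerm⁻¹ * (aPerm * aPerm) = aPerm * bPerm from by decide, s_a2, s_ab, cB_a2, ρ_x0, k1]
    simp [mul_inv_rev, ainv, binv, mul_assoc, cancelA, cancelB]
  · rw [show bPerm⁻¹ * bPerm = 1 from by decide, s_b, s_one, cB_b, map_one]
    simp [hbb, binv]
  · rw [show bPerm⁻¹ * (aPerm * bPerm) = aPerm * aPerm from by decide, s_ab, s_a2, cB_ab,
      map_inv, ρ_x0, k1]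
    simp [mul_inv_rev, ainv, binv, mul_assoc, cancelA, cancelB]
  · rw [show bPerm⁻¹ * (aPerm * aPerm * bPerm) = aPerm from by decide, s_a2b, s_a, cB_a2b, ρ_y0, k2]
    simp [mul_inv_rev, ainv, binv, mul_assoc, cancelA, cancelB]

lemma rinv_all : ∀ g : G, RInv g := by
  intro g
  induction g using Coprod.induction_on with
  | inl m =>
    rcases memA m.1 m.2 with h | h | h
    · rw [show m = 1 from Subtype.ext h, map_one]; exact rinv_one
    · rw [show m = aEl from Subtype.ext h]; exact rinv_a
    · rw [show m = aEl * aEl from Subtype.ext h, map_mul]; exact rinv_mul rinv_a rinv_a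
  | inr n =>
    rcases memB n.1 n.2 with h | h
    · rw [show n = 1 from Subtype.ext h, map_one]; exact rinv_one
    · rw [show n = bEl from Subtype.ext h]; exact rinv_b
  | mul x y hx hy => exact rinv_mul hx hy

lemma phi_left_mul (g h : G) (x : S3) :
    (Φ (g * h)).left x = (Φ g).left x * (Φ h).left ((pS3 g)⁻¹ * x) := by
  rw [map_mul, SemidirectProduct.mul_left, Pi.mul_apply, act_apply, right_phi]

lemma phiA_left : (Φ a').left = 1 := by rw [phi_a]; rfl
lemma phiB_left : (Φ b').left = cB := by rw [phi_b]; rfl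

lemma ker_eq (g : G) (hg : pS3 g = 1) : ρ ((Φ g).left 1) = g := by
  have h := rinv_all g 1
  rwa [hg, inv_one, one_mul, s_one, inv_one, one_mul, mul_one] at h

lemma phi_k1 : (Φ k1).left 1 = x0 := by
  rw [k1, phi_left_mul, phi_left_mul, phi_left_mul, phiA_left, phiB_left, pa, pb,
    show aPerm⁻¹ * (1 : S3) = aPerm * aPerm from by decide,
    show bPerm⁻¹ * (aPerm * aPerm) = aPerm * bPerm from by decide,
    show aPerm⁻¹ * (aPerm * bPerm) = bPerm from by decide,
    cB_a2, cB_b]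
  simp

lemma phi_k2 : (Φ k2).left 1 = y0 := by
  rw [k2, phi_left_mul, phi_left_mul, phi_left_mul, phiA_left, phiB_left, pa, pb,
    show bPerm⁻¹ * (1 : S3) = bPerm from by decide,
    show aPerm⁻¹ * bPerm = aPerm * aPerm * bPerm from by decide,
    show bPerm⁻¹ * (aPerm * aPerm * bPerm) = aPerm from by decide,
    cB_one, cB_a2b]
  simp

lemma pk1 : pS3 k1 = 1 := by
  rw [k1, map_mul, map_mul, map_mul, pa, pb]; decide
lemma pk2 : pS3 k2 = 1 := by
  rw [k2, map_mul, map_mul, map_mul, pa, pb]; decide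

lemma pρ (w : F2) : pS3 (ρ w) = 1 := by
  have h : pS3.comp ρ = 1 := by
    apply FreeGroup.ext_hom
    intro i
    fin_cases i
    · show pS3 (ρ (FreeGroup.of 0)) = 1
      rw [← x0, ρ_x0, pk1]
    · show pS3 (ρ (FreeGroup.of 1)) = 1
      rw [← y0, ρ_y0, pk2]
  exact DFunLike.congr_fun h w

def ρ' : F2 →* pS3.ker := ρ.codRestrict pS3.ker (fun w => MonoidHom.mem_ker.mpr (pρ w))

def κ : pS3.ker →* F2 where
  toFun g := (Φ g.1).left 1
  map_one' := by
    show (Φ ((1 : pS3.ker) : G)).left 1 = 1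
    rw [OneMemClass.coe_one, map_one]; rfl
  map_mul' := fun g h => by
    show (Φ ((g * h : pS3.ker) : G)).left 1 = (Φ (g : G)).left 1 * (Φ (h : G)).left 1
    rw [MulMemClass.coe_mul, phi_left_mul, MonoidHom.mem_ker.mp g.2, inv_one, one_mul]

lemma left_inv_κ : ∀ g : pS3.ker, ρ' (κ g) = g := fun g =>
  Subtype.ext (ker_eq g.1 (MonoidHom.mem_ker.mp g.2))

lemma right_inv_κ : ∀ w : F2, κ (ρ' w) = w := by
  have h : κ.comp ρ' = MonoidHom.id F2 := by
    apply FreeGroup.ext_hom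
    intro i
    fin_cases i
    · show κ (ρ' (FreeGroup.of 0)) = FreeGroup.of 0
      have : (ρ' (FreeGroup.of 0) : G) = k1 := by
        show ρ (FreeGroup.of 0) = k1
        rw [← x0, ρ_x0]
      show (Φ (ρ' (FreeGroup.of 0) : G)).left 1 = FreeGroup.of 0
      rw [this, phi_k1, x0]
    · show κ (ρ' (FreeGroup.of 1)) = FreeGroup.of 1
      have : (ρ' (FreeGroup.of 1) : G) = k2 := by
        show ρ (FreeGroup.of 1) = k2
        rw [← y0, ρ_y0]
      show (Φ (ρ' (FreeGroup.of 1) : G)).left 1 = FreeGroup.of 1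
      rw [this, phi_k2, y0]
  exact fun w => DFunLike.congr_fun h w

def kerEquiv : pS3.ker ≃* F2 :=
  { toFun := κ, invFun := ρ', left_inv := left_inv_κ, right_inv := right_inv_κ,
    map_mul' := κ.map_mul }

end S3FP

open S3FP

/-- `p : ⟨a⟩ ∗ ⟨b⟩ → S₃` is surjective, its kernel is the normal closure of
the single element `(ι₁(a) ι₂(b))²`, and the kernel is a free group of rank `2`. -/
theorem s3_free_product_kernel :
    Function.Surjective pS3 ∧
      pS3.ker = Subgroup.normalClosure
        {(Coprod.inl ⟨aPerm, Subgroup.mem_zpowers aPerm⟩ *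
          Coprod.inr ⟨bPerm, Subgroup.mem_zpowers bPerm⟩) ^ 2} ∧
      Nonempty (pS3.ker ≃* FreeGroup (Fin 2)) := by
  refine ⟨?_, ?_, ⟨kerEquiv⟩⟩
  · intro σ
    rcases S3cases σ with h | h | h | h | h | h <;> subst h
    · exact ⟨1, map_one _⟩
    · exact ⟨a', pa⟩
    · exact ⟨a' * a', by rw [map_mul, pa]⟩
    · exact ⟨b', pb⟩
    · exact ⟨a' * b', by rw [map_mul, pa, pb]⟩
    · exact ⟨a' * a' * b', by rw [map_mul, map_mul, pa, pb]⟩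
  · show pS3.ker = Subgroup.normalClosure {(a' * b') ^ 2}
    have hrmem : (a' * b') ^ 2 ∈ Subgroup.normalClosure {(a' * b') ^ 2} :=
      Subgroup.subset_normalClosure rfl
    have hk1N : k1 ∈ Subgroup.normalClosure {(a' * b') ^ 2} := by
      rw [show k1 = (a' * b') ^ 2 from by rw [sq, k1]; simp [mul_assoc]]
      exact hrmem
    have hk2N : k2 ∈ Subgroup.normalClosure {(a' * b') ^ 2} := by
      rw [show k2 = b' * (a' * b') ^ 2 * b'⁻¹ from by
        rw [sq, binv, k2]; simp [mul_assoc, hbb]]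
      exact Subgroup.normalClosure_normal.conj_mem _ hrmem b'
    have hrange : ρ.range ≤ Subgroup.normalClosure {(a' * b') ^ 2} := by
      rw [ρ, FreeGroup.range_lift_eq_closure]
      apply (Subgroup.closure_le _).mpr
      rintro g ⟨i, rfl⟩
      fin_cases i
      · show (if (0 : Fin 2) = 0 then k1 else k2) ∈ _
        rw [if_pos rfl]; exact hk1N
      · show (if (1 : Fin 2) = 0 then k1 else k2) ∈ _
        rw [if_neg (by decide)]; exact hk2N
    apply le_antisymm
    · intro g hg
      exact hrange ⟨(Φ g).left 1, ker_eq g (MonoidHom.mem_ker.mp hg)⟩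
    · apply Subgroup.normalClosure_le_normal
      rw [Set.singleton_subset_iff]
      show pS3 ((a' * b') ^ 2) = 1
      rw [map_pow, map_mul, pa, pb]
      decide
end

section
/- Let K_4 = C_2 × C_2 be the Klein four group with non-identity elements a, b, c (so ab = c), and let H_a = ⟨a⟩, H_b = ⟨b⟩, H_c = ⟨c⟩, each cyclic of order 2. Let p : H_a ∗ H_b ∗ H_c → K_4 be the homomorphism from the free product induced by the inclusions. Then p is surjective, its kernel is the normal closure in H_a ∗ H_b ∗ H_c of the single element ι_a(a)·ι_b(b)·ι_c(c), and Ker p is a free group of rank 3. -/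
/-!
Take `1, g_0, g_1, g_2` as coset representatives `t_s` of the kernel. The Reidemeister–Schreier
generators are then the three cyclic rotations `x_i = g_i g_{i+1} g_{i+2}` of `r = g_0 g_1 g_2`,
and `x_{i+1} = g_i x_i g_i⁻¹`, so they lie in the normal closure of `r`. To see that they
generate freely, let the free product act on `K₄ × F₃` by transporting left multiplication along
the normal form `(s, w) ↦ t_s · w(x)`: each `g_m` acts by an involution, the orbit map of `(1, 1)`
inverts the normal form, and `w(x)` sends `(1, w')` to `(1, w w')`.
-/

/-- The Klein four group `K₄ = C₂ × C₂`. -/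
abbrev KleinFour : Type := Multiplicative (ZMod 2 × ZMod 2)

/-- The three non-identity elements `a`, `b`, `c` of the Klein four group (so `a * b = c`). -/
def kGen : Fin 3 → KleinFour :=
  ![Multiplicative.ofAdd (1, 0), Multiplicative.ofAdd (0, 1), Multiplicative.ofAdd (1, 1)]

/-- The subgroups `H_a = ⟨a⟩`, `H_b = ⟨b⟩`, `H_c = ⟨c⟩` (each cyclic of order 2). -/
def kH (m : Fin 3) : Subgroup KleinFour := Subgroup.zpowers (kGen m)

/-- The homomorphism `p : H_a ∗ H_b ∗ H_c → K₄` from the free product induced by the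
inclusions. -/
def pK4 : Monoid.CoprodI (fun m : Fin 3 => kH m) →* KleinFour :=
  Monoid.CoprodI.lift fun m => (kH m).subtype

theorem Subgroup.eq_one_or_eq_of_mem_zpowers {G : Type*} [Group G] {x y : G} (hx : x * x = 1)
    (hy : y ∈ zpowers x) : y = 1 ∨ y = x := by
  obtain ⟨k, rfl⟩ := mem_zpowers_iff.mp hy
  rcases Int.even_or_odd' k with ⟨l, rfl | rfl⟩
  · simp [zpow_mul, pow_two, hx]
  · simp [zpow_add, zpow_mul, pow_two, hx]

def Subgroup.zpowersHomOfMulSelf {G H : Type*} [Group G] [DecidableEq G] [Group H] {x : G}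
    (hx : x * x = 1) (t : H) (ht : t * t = 1) : zpowers x →* H where
  toFun y := if (y : G) = 1 then 1 else t
  map_one' := if_pos rfl
  map_mul' y z := by
    rcases eq_one_or_eq_of_mem_zpowers hx y.2 with hy | hy
    · simp [hy]
    rcases eq_one_or_eq_of_mem_zpowers hx z.2 with hz | hz
    · simp [hz]
    by_cases h1 : x = 1 <;> simp [hy, hz, hx, ht, h1]

namespace KleinFourCoprod

open Monoid (CoprodI)

local notation "F₃" => FreeGroup (Fin 3)
local notation "G" => CoprodI (fun m : Fin 3 => kH m)

theorem kGen_mul_self : ∀ m, kGen m * kGen m = 1 := by decide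

theorem kGen_ne_one : ∀ m, kGen m ≠ 1 := by decide

def gen (m : Fin 3) : G := CoprodI.of ⟨kGen m, Subgroup.mem_zpowers _⟩

theorem pK4_gen (m : Fin 3) : pK4 (gen m) = kGen m := by
  rw [pK4, gen, CoprodI.lift_of]
  rfl

theorem gen_induction {motive : G → Prop} (g : G) (one : motive 1)
    (gen_mul : ∀ m g, motive g → motive (gen m * g)) : motive g := by
  induction g using CoprodI.induction_left with
  | one => exact one
  | @mul m h g ih =>
    rcases Subgroup.eq_one_or_eq_of_mem_zpowers (kGen_mul_self m) h.2 with h1 | hm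
    · rwa [show h = 1 from Subtype.ext h1, map_one, one_mul]
    · rw [show h = ⟨kGen m, Subgroup.mem_zpowers _⟩ from Subtype.ext hm]
      exact gen_mul m g ih

def cosetRep (s : KleinFour) : G :=
  if s = kGen 0 then gen 0 else if s = kGen 1 then gen 1 else if s = kGen 2 then gen 2 else 1

def schreierWord (i : Fin 3) : G := gen i * gen (i + 1) * gen (i + 2)

def schreierHom : F₃ →* G := FreeGroup.lift schreierWord

def cocycle (m : Fin 3) (s : KleinFour) : F₃ :=
  if s = kGen (m + 1) then .of (m - 1) else if s = kGen (m - 1) then (.of (m - 1))⁻¹ else 1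

theorem cocycle_mul_cocycle : ∀ m s, cocycle m (kGen m * s) * cocycle m s = 1 := by
  decide

-- The free product of groups with decidable equality has decidable equality (via reduced
-- words), so identities between explicit elements of `G` are checked by `decide`.
theorem cosetRep_mul_schreierHom_cocycle :
    ∀ m s, cosetRep (kGen m * s) * schreierHom (cocycle m s) = gen m * cosetRep s := by
  decide

theorem cosetRep_one : cosetRep 1 = 1 := by
  decide

theorem pK4_cosetRep : ∀ s, pK4 (cosetRep s) = s := by
  decide

theorem schreierWord_succ : ∀ i, schreierWord (i + 1) = gen i * schreierWord i * (gen i)⁻¹ := by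
  decide

def step (m : Fin 3) : Equiv.Perm (KleinFour × F₃) :=
  Function.Involutive.toPerm (fun x => (kGen m * x.1, cocycle m x.1 * x.2)) fun x => by
    simp only [← mul_assoc, kGen_mul_self, one_mul, cocycle_mul_cocycle]

theorem step_apply (m : Fin 3) (x : KleinFour × F₃) :
    step m x = (kGen m * x.1, cocycle m x.1 * x.2) :=
  rfl

theorem step_mul_self (m : Fin 3) : step m * step m = 1 :=
  mul_inv_cancel (step m)

def act : G →* Equiv.Perm (KleinFour × F₃) :=
  CoprodI.lift fun m =>
    (Subgroup.zpowersHomOfMulSelf (kGen_mul_self m) (step m) (step_mul_self m) : kH m →* _)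

theorem act_gen (m : Fin 3) : act (gen m) = step m :=
  (CoprodI.lift_of _ _).trans (if_neg (kGen_ne_one m))

theorem act_gen_mul_apply (m : Fin 3) (g : G) (x : KleinFour × F₃) :
    act (gen m * g) x = step m (act g x) := by
  rw [map_mul, Equiv.Perm.mul_apply, act_gen]

theorem act_apply_fst (g : G) (x : KleinFour × F₃) : (act g x).1 = pK4 g * x.1 := by
  induction g using gen_induction generalizing x with
  | one => simp
  | gen_mul m g ih => rw [act_gen_mul_apply, step_apply, ih, map_mul, pK4_gen, mul_assoc]

def ofNormalForm (x : KleinFour × F₃) : G := cosetRep x.1 * schreierHom x.2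

theorem ofNormalForm_one_fst (n : F₃) : ofNormalForm (1, n) = schreierHom n := by
  rw [ofNormalForm, cosetRep_one, one_mul]

theorem ofNormalForm_step (m : Fin 3) (x : KleinFour × F₃) :
    ofNormalForm (step m x) = gen m * ofNormalForm x := by
  rw [ofNormalForm, ofNormalForm, step_apply, map_mul, ← mul_assoc,
    cosetRep_mul_schreierHom_cocycle, mul_assoc]

theorem ofNormalForm_act (g : G) (x : KleinFour × F₃) :
    ofNormalForm (act g x) = g * ofNormalForm x := by
  induction g using gen_induction generalizing x with
  | one => simp
  | gen_mul m g ih => rw [act_gen_mul_apply, ofNormalForm_step, ih, mul_assoc]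

theorem act_schreierWord (i : Fin 3) (n : F₃) : act (schreierWord i) (1, n) = (1, .of i * n) := by
  fin_cases i <;> simp +decide [schreierWord, act_gen, step_apply, cocycle]

theorem act_schreierHom (n n' : F₃) : act (schreierHom n) (1, n') = (1, n * n') := by
  induction n generalizing n' with
  | C1 => simp
  | of i => rw [schreierHom, FreeGroup.lift_apply_of, act_schreierWord]
  | inv_of i ih => rw [map_inv, map_inv, Equiv.Perm.inv_eq_iff_eq, ih, mul_inv_cancel_left]
  | mul x y hx hy => rw [map_mul, map_mul, Equiv.Perm.mul_apply, hy, hx, mul_assoc]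

theorem schreierHom_injective : Function.Injective schreierHom := fun n n' h => by
  simpa [act_schreierHom] using congrArg (fun g => (act g (1, 1)).2) h

theorem ker_pK4_eq_range_schreierHom : pK4.ker = schreierHom.range := by
  apply le_antisymm
  · intro g hg
    have hfst : (act g (1, 1)).1 = 1 := by rw [act_apply_fst, hg, mul_one]
    refine ⟨(act g (1, 1)).2, ?_⟩
    calc schreierHom (act g (1, 1)).2 = ofNormalForm ((act g (1, 1)).1, (act g (1, 1)).2) := by
          rw [hfst, ofNormalForm_one_fst]
      _ = g := by rw [ofNormalForm_act, ofNormalForm_one_fst, map_one, mul_one]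
  · rw [MonoidHom.range_le_ker_iff]
    exact FreeGroup.ext_hom _ _ (by decide)

theorem range_schreierHom_le_normalClosure :
    schreierHom.range ≤ Subgroup.normalClosure {schreierWord 0} := by
  have h0 : schreierWord 0 ∈ Subgroup.normalClosure {schreierWord 0} :=
    Subgroup.subset_normalClosure rfl
  have h1 := schreierWord_succ 0 ▸ Subgroup.normalClosure_normal.conj_mem _ h0 (gen 0)
  have h2 := schreierWord_succ 1 ▸ Subgroup.normalClosure_normal.conj_mem _ h1 (gen 1)
  refine FreeGroup.range_lift_le ?_
  rintro _ ⟨i, rfl⟩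
  fin_cases i
  exacts [h0, h1, h2]

theorem ker_pK4_eq_normalClosure : pK4.ker = Subgroup.normalClosure {schreierWord 0} := by
  refine le_antisymm (ker_pK4_eq_range_schreierHom ▸ range_schreierHom_le_normalClosure) ?_
  refine Subgroup.normalClosure_le_normal (Set.singleton_subset_iff.mpr ?_)
  rw [ker_pK4_eq_range_schreierHom]
  exact ⟨.of 0, FreeGroup.lift_apply_of⟩

noncomputable def kerEquivFreeGroup : pK4.ker ≃* F₃ :=
  (MulEquiv.subgroupCongr ker_pK4_eq_range_schreierHom).trans
    (MonoidHom.ofInjective schreierHom_injective).symm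

end KleinFourCoprod

/-- `p : H_a ∗ H_b ∗ H_c → K₄` is surjective, its kernel is the normal closure
of the single element `ι_a(a) ι_b(b) ι_c(c)`, and the kernel is a free group of rank `3`. -/
theorem klein_free_product_kernel :
    Function.Surjective pK4 ∧
      pK4.ker = Subgroup.normalClosure
        {Monoid.CoprodI.of (M := fun m : Fin 3 => kH m) (i := 0) ⟨kGen 0, Subgroup.mem_zpowers _⟩ *
         Monoid.CoprodI.of (M := fun m : Fin 3 => kH m) (i := 1) ⟨kGen 1, Subgroup.mem_zpowers _⟩ *
         Monoid.CoprodI.of (M := fun m : Fin 3 => kH m) (i := 2) ⟨kGen 2, Subgroup.mem_zpowers _⟩} ∧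
      Nonempty (pK4.ker ≃* FreeGroup (Fin 3)) :=
  ⟨fun s => ⟨_, KleinFourCoprod.pK4_cosetRep s⟩, KleinFourCoprod.ker_pK4_eq_normalClosure,
    ⟨KleinFourCoprod.kerEquivFreeGroup⟩⟩
end
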